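/- arXiv:1812.11859 — 3 statements merged into one kernel-verified Lean document; each statement's English description precedes it below -/
import Mathlib

section
/- (Newton's inequality) Let a_1, ..., a_n be positive reals, not all equal, and let c_k denote the k-th elementary symmetric polynomial of a_1,...,a_n (with c_0 = 1). Then for 1 ≤ k ≤ n−1, c_{k−1} c_{k+1} < c_k^2. -/
/-!
Adjoining a variable `x` multiplies the generating polynomial `∑ eₖ Tᵏ` of the elementary
symmetric polynomials by `1 + x T`, so `e'ₖ₊₁ = eₖ₊₁ + x eₖ`. For `x > 0` this preserves strict
log-concavity of a nonnegative sequence that is positive up to the number of variables, so the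
inequality follows by induction on the number of variables.
-/

section LogConcave

variable {R : Type*} [CommRing R] [LinearOrder R] [IsStrictOrderedRing R]

theorem mul_le_mul_of_log_concave {u v w z : R} (hu : 0 ≤ u) (hv : 0 < v) (hw : 0 ≤ w)
    (huw : u * w ≤ v ^ 2) (hvz : v * z ≤ w ^ 2) : u * z ≤ v * w := by
  nlinarith [mul_le_mul_of_nonneg_left hvz (mul_nonneg hu hv.le),
    mul_le_mul_of_nonneg_left huw (mul_nonneg hv.le hw), mul_pos hv hv]

-- The difference of the two sides is `(w² - vz) + x (vw - uz) + x² (v² - uw)`.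
theorem add_mul_mul_add_mul_lt_sq {x u v w z : R} (hx : 0 < x) (hu : 0 ≤ u) (hv : 0 < v)
    (hw : 0 ≤ w) (huw : u * w < v ^ 2) (hvz : v * z ≤ w ^ 2) :
    (v + x * u) * (z + x * w) < (w + x * v) ^ 2 := by
  have huz := mul_le_mul_of_log_concave hu hv hw huw.le hvz
  nlinarith [mul_nonneg hx.le (sub_nonneg.2 huz), mul_pos (pow_pos hx 2) (sub_pos.2 huw)]

end LogConcave

namespace Multiset

section CommSemiring

variable {R : Type*} [CommSemiring R]

@[simp]
theorem esymm_zero (s : Multiset R) : s.esymm 0 = 1 := by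
  simp [esymm, powersetCard_zero_left]

theorem esymm_cons_succ (a : R) (s : Multiset R) (k : ℕ) :
    (a ::ₘ s).esymm (k + 1) = s.esymm (k + 1) + a * s.esymm k := by
  simp [esymm, powersetCard_cons, map_map, sum_map_mul_left]

theorem esymm_eq_zero_of_card_lt {s : Multiset R} {k : ℕ} (h : card s < k) : s.esymm k = 0 := by
  simp [esymm, powersetCard_eq_empty k h]

theorem esymm_nonneg [PartialOrder R] [IsOrderedRing R] {s : Multiset R} (hs : ∀ x ∈ s, 0 ≤ x)
    (k : ℕ) : 0 ≤ s.esymm k := by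
  refine sum_nonneg fun p hp => ?_
  obtain ⟨t, ht, rfl⟩ := mem_map.1 hp
  exact prod_nonneg fun x hx => hs x (mem_of_le (mem_powersetCard.1 ht).1 hx)

theorem esymm_pos [PartialOrder R] [IsStrictOrderedRing R] {s : Multiset R}
    (hs : ∀ x ∈ s, 0 < x) {k : ℕ} (hk : k ≤ card s) : 0 < s.esymm k := by
  induction s using Multiset.induction_on generalizing k with
  | empty => simp_all
  | cons a s ih =>
    have hs' : ∀ x ∈ s, 0 < x := fun x hx => hs x (mem_cons_of_mem hx)
    cases k with
    | zero => simp
    | succ k =>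
      rw [esymm_cons_succ]
      have ha := hs a (mem_cons_self a s)
      have hsk := ih hs' (k := k) (by simpa using hk)
      have hsk' := esymm_nonneg (fun x hx => (hs' x hx).le) (k + 1)
      positivity

end CommSemiring

theorem esymm_mul_esymm_lt_sq {R : Type*} [CommRing R] [LinearOrder R] [IsStrictOrderedRing R]
    {s : Multiset R} (hs : ∀ x ∈ s, 0 < x) {j : ℕ} (hj : j < card s) :
    s.esymm j * s.esymm (j + 2) < s.esymm (j + 1) ^ 2 := by
  induction s using Multiset.induction_on generalizing j with
  | empty => simp at hj
  | cons a s ih =>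
    have ha : 0 < a := hs a (mem_cons_self a s)
    have hs' : ∀ x ∈ s, 0 < x := fun x hx => hs x (mem_cons_of_mem hx)
    have hnonneg := esymm_nonneg fun x hx => (hs' x hx).le
    have hle : ∀ i, s.esymm i * s.esymm (i + 2) ≤ s.esymm (i + 1) ^ 2 := fun i =>
      (lt_or_ge i (card s)).elim (fun h => (ih hs' h).le) fun h => by
        rw [esymm_eq_zero_of_card_lt (k := i + 1) (by omega),
          esymm_eq_zero_of_card_lt (k := i + 2) (by omega)]
        simp
    rw [card_cons] at hj
    cases j with
    | zero =>
      -- `u = 0` stands for the missing `e₋₁`.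
      simp only [esymm_cons_succ]
      simpa using add_mul_mul_add_mul_lt_sq ha le_rfl one_pos (hnonneg 1) (by simp)
        (by simpa using hle 0)
    | succ i =>
      simp only [esymm_cons_succ]
      exact add_mul_mul_add_mul_lt_sq ha (hnonneg i) (esymm_pos hs' (by omega)) (hnonneg _)
        (ih hs' (by omega)) (hle (i + 1))

end Multiset

theorem newton_inequality_general (n : ℕ) (a : Fin n → ℝ)
    (hpos : ∀ i, 0 < a i)
    (c : ℕ → ℝ)
    (hc : ∀ k, c k = ∑ A ∈ Finset.univ.powersetCard k, ∏ i ∈ A, a i)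
    (k : ℕ) (hk1 : 1 ≤ k) (hkn : k ≤ n - 1) :
    c (k - 1) * c (k + 1) < c k ^ 2 := by
  obtain ⟨j, rfl⟩ : ∃ j, k = j + 1 := ⟨k - 1, by omega⟩
  have hc' : ∀ k, c k = (Finset.univ.val.map a).esymm k := fun k => by
    rw [hc, Finset.esymm_map_val]
  simp only [hc', Nat.add_sub_cancel]
  exact Multiset.esymm_mul_esymm_lt_sq (by simpa using hpos) (by simp; omega)

/-- Newton's inequality: if `a_1, …, a_n` are positive reals, not all equal, and
`c_k` is the `k`-th elementary symmetric polynomial of the `a_i`, then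
`c_{k−1} c_{k+1} < c_k²` for `1 ≤ k ≤ n−1`. -/
theorem newton_inequality (n : ℕ) (a : Fin n → ℝ)
    (hpos : ∀ i, 0 < a i) (hne : ¬ ∀ i j, a i = a j)
    (c : ℕ → ℝ)
    (hc : ∀ k, c k = ∑ A ∈ Finset.univ.powersetCard k, ∏ i ∈ A, a i)
    (k : ℕ) (hk1 : 1 ≤ k) (hkn : k ≤ n - 1) :
    c (k - 1) * c (k + 1) < c k ^ 2 :=
  newton_inequality_general n a hpos c hc k hk1 hkn
end

section
/- The Shannon entropy H(p_1,...,p_n) = −Σ_{k=0}^n π_k^n log π_k^n of the Poisson binomial distribution with parameters p_1,...,p_n ∈ (0,1) is Schur concave in (p_1,...,p_n). Consequently, H(p_1,...,p_n) ≤ H(p̄,...,p̄) where p̄ = (Σ p_i)/n; i.e., among all Poisson binomial distributions with a given mean np̄, the binomial distribution B(n, p̄) maximizes the Shannon entropy. -/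
/-- The Poisson binomial mass function. -/
def poissonBinomial (n : ℕ) (p : ℕ → ℝ) (k : ℕ) : ℝ :=
  ∑ A ∈ (Finset.range n).powersetCard k,
    (∏ i ∈ A, p i) * ∏ j ∈ Finset.range n \ A, (1 - p j)

/-- The Shannon entropy of the Poisson binomial distribution with parameters
`p 0, …, p (n-1)`. -/
noncomputable def pbEntropy (n : ℕ) (p : ℕ → ℝ) : ℝ :=
  -∑ k ∈ Finset.range (n + 1),
    poissonBinomial n p k * Real.log (poissonBinomial n p k)

/-!
The Poisson binomial law is the coefficient sequence of `∏ i, (p i X + 1 - p i)`, and these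
coefficients are log-concave (Newton's inequalities). Moving `p i` alone moves the polynomial in
the direction `(X - 1) ∏_{m ≠ i}`, and two such directions differ by `(p i - p j) (X - 1)² B`,
where `B` is the product without the factors `i` and `j`. Pairing `(X - 1)² B` with `log π` gives
second differences of `log π` weighted by the nonnegative coefficients of `B`, which are
nonpositive by log-concavity: this is the Schur–Ostrowski condition. Along a transfer
`(p i, p j) = (v, σ - v)` the polynomial is `(1 + σ (X - 1)) B + v (σ - v) (X - 1)² B`, so the
entropy increases as long as `v ≤ σ / 2`, and finitely many transfers reach the mean.
-/

open Finset Polynomial Real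

section PGF

variable {ι : Type*}

noncomputable def poissonBinomialPGF (s : Finset ι) (p : ι → ℝ) : ℝ[X] :=
  ∏ i ∈ s, (C (p i) * X + C (1 - p i))

theorem coeff_poissonBinomialPGF [DecidableEq ι] (s : Finset ι) (p : ι → ℝ) (k : ℕ) :
    (poissonBinomialPGF s p).coeff k =
      ∑ A ∈ s.powersetCard k, (∏ i ∈ A, p i) * ∏ j ∈ s \ A, (1 - p j) := by
  have hterm : ∀ A ∈ s.powerset, (∏ i ∈ A, C (p i) * X) * ∏ j ∈ s \ A, C (1 - p j) =
      C ((∏ i ∈ A, p i) * ∏ j ∈ s \ A, (1 - p j)) * X ^ #A := by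
    intro A _
    rw [prod_mul_distrib, prod_const, map_mul, map_prod, map_prod]
    ring
  rw [poissonBinomialPGF, prod_add, sum_congr rfl hterm, finsetSum_coeff]
  simp only [coeff_C_mul_X_pow, powersetCard_eq_filter, sum_filter, eq_comm]

theorem natDegree_poissonBinomialPGF_le (s : Finset ι) (p : ι → ℝ) :
    (poissonBinomialPGF s p).natDegree ≤ #s := by
  refine (natDegree_prod_le _ _).trans ?_
  simpa using sum_le_sum fun i (_ : i ∈ s) => natDegree_linear_le (a := p i) (b := 1 - p i)

theorem sum_coeff_poissonBinomialPGF (s : Finset ι) (p : ι → ℝ) :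
    ∑ k ∈ range (#s + 1), (poissonBinomialPGF s p).coeff k = 1 := by
  have h := eval_eq_sum_range' (Nat.lt_succ_of_le (natDegree_poissonBinomialPGF_le s p)) 1
  simp only [one_pow, mul_one] at h
  rw [← h, poissonBinomialPGF, eval_prod]
  simp

theorem prod_mul_prod_sdiff_nonneg [DecidableEq ι] {s A : Finset ι} {p : ι → ℝ}
    (hp : ∀ i ∈ s, p i ∈ Set.Icc 0 1) (hA : A ⊆ s) :
    0 ≤ (∏ i ∈ A, p i) * ∏ j ∈ s \ A, (1 - p j) :=
  mul_nonneg (prod_nonneg fun i hi => (hp i (hA hi)).1)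
    (prod_nonneg fun j hj => sub_nonneg.2 (hp j (mem_sdiff.1 hj).1).2)

theorem coeff_poissonBinomialPGF_nonneg {s : Finset ι} {p : ι → ℝ}
    (hp : ∀ i ∈ s, p i ∈ Set.Icc 0 1) (k : ℕ) : 0 ≤ (poissonBinomialPGF s p).coeff k := by
  classical
  rw [coeff_poissonBinomialPGF]
  exact sum_nonneg fun A hA => prod_mul_prod_sdiff_nonneg hp (mem_powersetCard.1 hA).1

theorem coeff_poissonBinomialPGF_pos {s : Finset ι} {p : ι → ℝ}
    (hp : ∀ i ∈ s, p i ∈ Set.Ioo 0 1) {k : ℕ} (hk : k ≤ #s) :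
    0 < (poissonBinomialPGF s p).coeff k := by
  classical
  have hp' : ∀ i ∈ s, p i ∈ Set.Icc 0 1 := fun i hi => Set.Ioo_subset_Icc_self (hp i hi)
  obtain ⟨A, hAs, rfl⟩ := exists_subset_card_eq hk
  rw [coeff_poissonBinomialPGF]
  refine sum_pos' (fun B hB => prod_mul_prod_sdiff_nonneg hp' (mem_powersetCard.1 hB).1)
    ⟨A, mem_powersetCard.2 ⟨hAs, rfl⟩, ?_⟩
  exact mul_pos (prod_pos fun i hi => (hp i (hAs hi)).1)
    (prod_pos fun j hj => sub_pos.2 (hp j (mem_sdiff.1 hj).1).2)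

theorem poissonBinomialPGF_congr {s : Finset ι} {p q : ι → ℝ} (h : ∀ i ∈ s, p i = q i) :
    poissonBinomialPGF s p = poissonBinomialPGF s q :=
  prod_congr rfl fun i hi => by rw [h i hi]

theorem poissonBinomialPGF_eq_mul_erase [DecidableEq ι] {s : Finset ι} {i : ι} (hi : i ∈ s)
    (p : ι → ℝ) :
    poissonBinomialPGF s p = (C (p i) * X + C (1 - p i)) * poissonBinomialPGF (s.erase i) p :=
  (mul_prod_erase s _ hi).symm

theorem poissonBinomialPGF_update [DecidableEq ι] {s : Finset ι} {i : ι} (hi : i ∈ s)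
    (p : ι → ℝ) (t : ℝ) :
    poissonBinomialPGF s (Function.update p i t) =
      (C t * X + C (1 - t)) * poissonBinomialPGF (s.erase i) p := by
  rw [poissonBinomialPGF_eq_mul_erase hi, Function.update_self,
    poissonBinomialPGF_congr fun j hj => Function.update_of_ne (ne_of_mem_erase hj) t p]

theorem poissonBinomialPGF_update_update [DecidableEq ι] {s : Finset ι} {i j : ι} (hi : i ∈ s)
    (hj : j ∈ s) (hij : i ≠ j) (p : ι → ℝ) (x y : ℝ) :
    poissonBinomialPGF s (Function.update (Function.update p i x) j y) =
      (C x * X + C (1 - x)) * ((C y * X + C (1 - y)) *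
        poissonBinomialPGF ((s.erase i).erase j) p) := by
  rw [poissonBinomialPGF_eq_mul_erase hi, poissonBinomialPGF_update (mem_erase.2 ⟨hij.symm, hj⟩),
    Function.update_of_ne hij, Function.update_self,
    poissonBinomialPGF_congr fun m hm =>
      Function.update_of_ne (ne_of_mem_erase (mem_of_mem_erase hm)) x p]

theorem poissonBinomial_eq_coeff (n : ℕ) (p : ℕ → ℝ) (k : ℕ) :
    poissonBinomial n p k = (poissonBinomialPGF (range n) p).coeff k :=
  (coeff_poissonBinomialPGF _ p k).symm

end PGF

theorem coeff_bernoulli_mul_zero (x : ℝ) (P : ℝ[X]) :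
    ((C x * X + C (1 - x)) * P).coeff 0 = (1 - x) * P.coeff 0 := by
  rw [add_mul, coeff_add, mul_assoc, coeff_C_mul, coeff_X_mul_zero, coeff_C_mul, mul_zero, zero_add]

theorem coeff_bernoulli_mul_succ (x : ℝ) (P : ℝ[X]) (k : ℕ) :
    ((C x * X + C (1 - x)) * P).coeff (k + 1) = x * P.coeff k + (1 - x) * P.coeff (k + 1) := by
  rw [add_mul, coeff_add, mul_assoc, coeff_C_mul, coeff_X_mul, coeff_C_mul]

/-- For a polynomial with nonnegative coefficients this is log-concavity of the coefficients
without internal zeros, in the form that survives multiplication by a Bernoulli factor. -/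
def CoeffLogConcave (P : ℝ[X]) : Prop :=
  ∀ k l, k ≤ l → P.coeff k * P.coeff (l + 2) ≤ P.coeff (k + 1) * P.coeff (l + 1)

theorem CoeffLogConcave.bernoulli_mul {P : ℝ[X]} (hP : CoeffLogConcave P)
    (hnn : ∀ k, 0 ≤ P.coeff k) {x : ℝ} (hx : x ∈ Set.Icc 0 1) :
    CoeffLogConcave ((C x * X + C (1 - x)) * P) := by
  obtain ⟨hx0, hx1⟩ := hx
  have hy0 : 0 ≤ 1 - x := sub_nonneg.2 hx1
  rintro (_ | k) l hkl
  · simp only [coeff_bernoulli_mul_zero, coeff_bernoulli_mul_succ, zero_add]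
    nlinarith [mul_nonneg (mul_nonneg hy0 hy0) (sub_nonneg.2 (hP 0 l l.zero_le)),
      mul_nonneg (mul_nonneg hx0 hx0) (mul_nonneg (hnn 0) (hnn l)),
      mul_nonneg (mul_nonneg hx0 hy0) (mul_nonneg (hnn 1) (hnn l))]
  · obtain ⟨l, rfl⟩ : ∃ l', l = l' + 1 := ⟨l - 1, by omega⟩
    have hkl : k ≤ l := by omega
    have hshift : P.coeff k * P.coeff (l + 3) ≤ P.coeff (k + 2) * P.coeff (l + 1) := by
      rcases hkl.eq_or_lt with rfl | hlt
      · linarith [hP k (k + 1) k.le_succ]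
      · exact (hP k (l + 1) (by omega)).trans (hP (k + 1) l hlt)
    simp only [coeff_bernoulli_mul_succ]
    nlinarith [mul_nonneg (mul_nonneg hx0 hx0) (sub_nonneg.2 (hP k l hkl)),
      mul_nonneg (mul_nonneg hy0 hy0) (sub_nonneg.2 (hP (k + 1) (l + 1) (by omega))),
      mul_nonneg (mul_nonneg hx0 hy0) (sub_nonneg.2 hshift)]

theorem coeffLogConcave_poissonBinomialPGF {ι : Type*} {s : Finset ι} {p : ι → ℝ}
    (hp : ∀ i ∈ s, p i ∈ Set.Icc 0 1) : CoeffLogConcave (poissonBinomialPGF s p) := by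
  classical
  induction s using Finset.induction_on with
  | empty =>
    intro k l _
    simp [poissonBinomialPGF, coeff_one]
  | insert i s hi ih =>
    have hps : ∀ j ∈ s, p j ∈ Set.Icc 0 1 := fun j hj => hp j (mem_insert_of_mem hj)
    rw [poissonBinomialPGF, prod_insert hi]
    exact (ih hps).bernoulli_mul (coeff_poissonBinomialPGF_nonneg hps) (hp i (mem_insert_self i s))

theorem log_coeff_poissonBinomialPGF_concave {ι : Type*} {s : Finset ι}
    {p : ι → ℝ} (hp : ∀ i ∈ s, p i ∈ Set.Ioo 0 1) {k : ℕ} (hk : k + 2 ≤ #s) :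
    log ((poissonBinomialPGF s p).coeff k) + log ((poissonBinomialPGF s p).coeff (k + 2)) ≤
      2 * log ((poissonBinomialPGF s p).coeff (k + 1)) := by
  have hpos : ∀ m ≤ k + 2, 0 < (poissonBinomialPGF s p).coeff m :=
    fun m hm => coeff_poissonBinomialPGF_pos hp (hm.trans hk)
  have hlc := coeffLogConcave_poissonBinomialPGF (fun i hi => Set.Ioo_subset_Icc_self (hp i hi))
    k k le_rfl
  rw [← log_mul (hpos k (by omega)).ne' (hpos (k + 2) le_rfl).ne', two_mul,
    ← log_mul (hpos (k + 1) (by omega)).ne' (hpos (k + 1) (by omega)).ne']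
  exact log_le_log (mul_pos (hpos k (by omega)) (hpos (k + 2) le_rfl)) hlc

theorem sum_coeff_X_sub_one_sq_mul {B : ℝ[X]} {N n : ℕ} (hB : B.natDegree < N) (hN : N + 1 ≤ n)
    (L : ℕ → ℝ) :
    ∑ k ∈ range (n + 1), ((X - 1) ^ 2 * B).coeff k * L k =
      ∑ m ∈ range N, B.coeff m * (L m - 2 * L (m + 1) + L (m + 2)) := by
  conv_lhs => rw [B.as_sum_range' N hB, mul_sum]
  simp only [finsetSum_coeff, sum_mul]
  rw [sum_comm]
  refine sum_congr rfl fun m hm => ?_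
  have hm : m + 2 < n + 1 := by have := mem_range.1 hm; omega
  have hexpand : (X - 1) ^ 2 * monomial m (B.coeff m) =
      monomial (m + 2) (B.coeff m) - monomial (m + 1) (2 * B.coeff m) + monomial m (B.coeff m) := by
    simp only [← C_mul_X_pow_eq_monomial, map_mul, map_ofNat]
    ring
  simp only [hexpand, coeff_add, coeff_sub, coeff_monomial, add_mul, sub_mul, ite_mul, zero_mul,
    sum_add_distrib, sum_sub_distrib, sum_ite_eq, mem_range, hm, (by omega : m + 1 < n + 1),
    (by omega : m < n + 1), if_true]
  ring

theorem sum_coeff_X_sub_one_sq_mul_nonpos {B : ℝ[X]} {n : ℕ} (hB : ∀ k, 0 ≤ B.coeff k)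
    (hdeg : B.natDegree + 2 ≤ n) {L : ℕ → ℝ}
    (hL : ∀ k, k + 2 ≤ n → L k + L (k + 2) ≤ 2 * L (k + 1)) :
    ∑ k ∈ range (n + 1), ((X - 1) ^ 2 * B).coeff k * L k ≤ 0 := by
  rw [sum_coeff_X_sub_one_sq_mul B.natDegree.lt_succ_self (by omega)]
  refine sum_nonpos fun m hm => mul_nonpos_of_nonneg_of_nonpos (hB m) ?_
  have := hL m (by have := mem_range.1 hm; omega)
  linarith

noncomputable def coeffEntropy (n : ℕ) (P : ℝ[X]) : ℝ :=
  -∑ k ∈ range (n + 1), P.coeff k * log (P.coeff k)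

theorem pbEntropy_eq_coeffEntropy (n : ℕ) (p : ℕ → ℝ) :
    pbEntropy n p = coeffEntropy n (poissonBinomialPGF (range n) p) := by
  simp only [pbEntropy, coeffEntropy, poissonBinomial_eq_coeff]

theorem hasDerivAt_coeffEntropy {n : ℕ} {P : ℝ → ℝ[X]} {P₀ Q : ℝ[X]} {φ : ℝ → ℝ} {φ' t : ℝ}
    (hP : ∀ t, P t = P₀ + C (φ t) * Q) (hφ : HasDerivAt φ φ' t)
    (hpos : ∀ k ≤ n, (P t).coeff k ≠ 0) (hsum : ∀ t, ∑ k ∈ range (n + 1), (P t).coeff k = 1) :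
    HasDerivAt (fun t => coeffEntropy n (P t))
      (-φ' * ∑ k ∈ range (n + 1), Q.coeff k * log ((P t).coeff k)) t := by
  have hcoeff : ∀ k, HasDerivAt (fun t => (P t).coeff k) (φ' * Q.coeff k) t := fun k => by
    simp only [hP, coeff_add, coeff_C_mul]
    exact (hφ.mul_const _).const_add _
  -- the coefficients sum to one along the whole family, so their derivatives sum to zero
  have hzero : ∑ k ∈ range (n + 1), φ' * Q.coeff k = 0 := by
    have h := HasDerivAt.fun_sum (u := range (n + 1)) fun k _ => hcoeff k
    simp only [hsum] at h
    exact h.unique (hasDerivAt_const t 1)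
  have hterm : ∀ k ∈ range (n + 1), HasDerivAt (fun t => (P t).coeff k * log ((P t).coeff k))
      (φ' * Q.coeff k * log ((P t).coeff k) + φ' * Q.coeff k) t := fun k hk => by
    have hk := hpos k (Nat.lt_succ_iff.1 (mem_range.1 hk))
    refine ((hcoeff k).mul ((hcoeff k).log hk)).congr_deriv ?_
    field_simp
  refine (HasDerivAt.fun_sum hterm).neg.congr_deriv ?_
  rw [sum_add_distrib, hzero, add_zero, mul_sum, ← sum_neg_distrib]
  exact sum_congr rfl fun k _ => by ring

section Transfer

variable {ι : Type*} {s : Finset ι}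

theorem exists_lt_and_gt_of_sum_eq {p : ι → ℝ} {c : ℝ} (hsum : ∑ m ∈ s, p m = #s * c)
    (hne : ∃ m ∈ s, p m ≠ c) : (∃ i ∈ s, p i < c) ∧ ∃ j ∈ s, c < p j := by
  have hconst : ∑ _m ∈ s, c = ∑ m ∈ s, p m := by rw [sum_const, nsmul_eq_mul, hsum]
  obtain ⟨m, hm, hmc⟩ := hne
  constructor <;> by_contra! h
  · exact hmc ((sum_eq_sum_iff_of_le h).1 hconst m hm).symm
  · exact hmc ((sum_eq_sum_iff_of_le h).1 hconst.symm m hm)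

variable [DecidableEq ι]

theorem sum_update_update {p : ι → ℝ} {i j : ι} (hi : i ∈ s) (hj : j ∈ s) (hij : i ≠ j)
    (x y : ℝ) :
    ∑ m ∈ s, Function.update (Function.update p i x) j y m =
      ∑ m ∈ s, p m + (x - p i) + (y - p j) := by
  have hsplit : ∀ f : ι → ℝ, ∑ m ∈ s, f m = f j + (f i + ∑ m ∈ (s.erase j).erase i, f m) :=
    fun f => by rw [add_sum_erase _ _ (mem_erase.2 ⟨hij, hi⟩), add_sum_erase _ _ hj]
  rw [hsplit, hsplit p, sum_congr rfl fun m hm => by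
    rw [Function.update_of_ne (ne_of_mem_erase (mem_of_mem_erase hm)),
      Function.update_of_ne (ne_of_mem_erase hm)]]
  simp only [Function.update_self, Function.update_of_ne hij]
  ring

theorem update_update_mem {I : Set ℝ} (hI : I.OrdConnected) {p : ι → ℝ}
    (hp : ∀ m ∈ s, p m ∈ I) {i j : ι} (hi : i ∈ s) (hj : j ∈ s) {u : ℝ} (hu : p i ≤ u)
    (hu' : u ≤ (p i + p j) / 2) :
    ∀ m ∈ s, Function.update (Function.update p i u) j (p i + p j - u) m ∈ I := by
  have hIcc := hI.out (hp i hi) (hp j hj)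
  intro m hm
  simp only [Function.update_apply]
  split_ifs
  · exact hIcc ⟨by linarith, by linarith⟩
  · exact hIcc ⟨hu, by linarith⟩
  · exact hp m hm

theorem card_filter_update_update_ne_lt {p : ι → ℝ} {c u v : ℝ} {i j : ι} (hi : i ∈ s)
    (hj : j ∈ s) (hij : i ≠ j) (hic : p i ≠ c) (hjc : p j ≠ c) (hc : u = c ∨ v = c) :
    #{m ∈ s | Function.update (Function.update p i u) j v m ≠ c} < #{m ∈ s | p m ≠ c} := by
  set p' := Function.update (Function.update p i u) j v
  have hle : {m ∈ s | p' m ≠ c} ⊆ {m ∈ s | p m ≠ c} := by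
    refine monotone_filter_right s fun m _ hmc => ?_
    by_cases hmi : m = i
    · exact hmi ▸ hic
    by_cases hmj : m = j
    · exact hmj ▸ hjc
    simpa only [p', Function.update_of_ne hmj, Function.update_of_ne hmi] using hmc
  refine card_lt_card ((ssubset_iff_of_subset hle).2 ?_)
  rcases hc with rfl | rfl
  · refine ⟨i, mem_filter.2 ⟨hi, hic⟩, fun hmem => (mem_filter.1 hmem).2 ?_⟩
    simp only [p', Function.update_of_ne hij, Function.update_self]
  · exact ⟨j, mem_filter.2 ⟨hj, hjc⟩, fun hmem => (mem_filter.1 hmem).2 (Function.update_self ..)⟩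

variable {I : Set ℝ} {f : (ι → ℝ) → ℝ}

theorem le_apply_const_of_transfer (hI : I.OrdConnected)
    (hf : ∀ p q, (∀ m ∈ s, p m = q m) → f p = f q)
    (htransfer : ∀ p, (∀ m ∈ s, p m ∈ I) → ∀ i ∈ s, ∀ j ∈ s, i ≠ j → ∀ u, p i ≤ u →
      u ≤ (p i + p j) / 2 → f p ≤ f (Function.update (Function.update p i u) j (p i + p j - u)))
    {c : ℝ} {p : ι → ℝ} (hp : ∀ m ∈ s, p m ∈ I) (hsum : ∑ m ∈ s, p m = #s * c) :
    f p ≤ f fun _ => c := by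
  induction hN : #{m ∈ s | p m ≠ c} using Nat.strong_induction_on generalizing p with
  | _ N ih =>
  by_cases hne : ∃ m ∈ s, p m ≠ c
  swap
  · push Not at hne
    exact (hf _ _ hne).le
  obtain ⟨⟨i, hi, hic⟩, ⟨j, hj, hcj⟩⟩ := exists_lt_and_gt_of_sum_eq hsum hne
  have hij : i ≠ j := by rintro rfl; linarith
  -- the largest transfer from `j` to `i` that moves neither past `c`
  set u := min c (p i + p j - c)
  have hu : p i ≤ u := le_min hic.le (by linarith)
  have hu' : u ≤ (p i + p j) / 2 := by
    linarith [min_le_left c (p i + p j - c), min_le_right c (p i + p j - c)]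
  have hreach : u = c ∨ p i + p j - u = c := by
    rcases min_choice c (p i + p j - c) with h | h
    · exact .inl h
    · exact .inr (by linarith)
  refine (htransfer p hp i hi j hj hij u hu hu').trans
    (ih _ ?_ (update_update_mem hI hp hi hj hu hu') ?_ rfl)
  · exact hN ▸ card_filter_update_update_ne_lt hi hj hij hic.ne hcj.ne' hreach
  · rw [sum_update_update hi hj hij, hsum]
    ring

theorem le_apply_mean_of_transfer (hI : I.OrdConnected)
    (hf : ∀ p q, (∀ m ∈ s, p m = q m) → f p = f q)
    (htransfer : ∀ p, (∀ m ∈ s, p m ∈ I) → ∀ i ∈ s, ∀ j ∈ s, i ≠ j → ∀ u, p i ≤ u →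
      u ≤ (p i + p j) / 2 → f p ≤ f (Function.update (Function.update p i u) j (p i + p j - u)))
    {p : ι → ℝ} (hp : ∀ m ∈ s, p m ∈ I) : f p ≤ f fun _ => (∑ m ∈ s, p m) / #s := by
  rcases s.eq_empty_or_nonempty with rfl | hs
  · exact (hf _ _ (by simp)).le
  · exact le_apply_const_of_transfer hI hf htransfer hp (by field_simp [hs.card_pos.ne'])

end Transfer

section PoissonBinomial

variable {n : ℕ} {p : ℕ → ℝ}

theorem pbEntropy_congr {q : ℕ → ℝ} (h : ∀ m ∈ range n, p m = q m) :
    pbEntropy n p = pbEntropy n q := by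
  rw [pbEntropy_eq_coeffEntropy, pbEntropy_eq_coeffEntropy, poissonBinomialPGF_congr h]

theorem hasDerivAt_pbEntropy {q : ℝ → ℕ → ℝ} {P₀ Q : ℝ[X]} {φ : ℝ → ℝ} {φ' t : ℝ}
    (hq : ∀ t, poissonBinomialPGF (range n) (q t) = P₀ + C (φ t) * Q) (hφ : HasDerivAt φ φ' t)
    (hqt : ∀ m ∈ range n, q t m ∈ Set.Ioo 0 1) :
    HasDerivAt (fun t => pbEntropy n (q t))
      (-φ' * ∑ k ∈ range (n + 1), Q.coeff k * log (poissonBinomial n (q t) k)) t := by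
  simp only [pbEntropy_eq_coeffEntropy, poissonBinomial_eq_coeff]
  refine hasDerivAt_coeffEntropy hq hφ (fun k hk => ?_) fun t => ?_
  · exact (coeff_poissonBinomialPGF_pos hqt (by rwa [card_range])).ne'
  · simpa using sum_coeff_poissonBinomialPGF (range n) (q t)

theorem deriv_pbEntropy_update (hp : ∀ m ∈ range n, p m ∈ Set.Ioo 0 1) {i : ℕ}
    (hi : i ∈ range n) :
    deriv (fun t => pbEntropy n (Function.update p i t)) (p i) =
      -∑ k ∈ range (n + 1), ((X - 1) * poissonBinomialPGF ((range n).erase i) p).coeff k *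
        log (poissonBinomial n p k) := by
  have hq : ∀ t, poissonBinomialPGF (range n) (Function.update p i t) =
      poissonBinomialPGF ((range n).erase i) p +
        C t * ((X - 1) * poissonBinomialPGF ((range n).erase i) p) := fun t => by
    rw [poissonBinomialPGF_update hi, map_sub, map_one]
    ring
  have h := hasDerivAt_pbEntropy hq (hasDerivAt_id (p i)) (by rwa [Function.update_eq_self])
  rw [h.deriv, Function.update_eq_self, neg_one_mul]

theorem deriv_pbEntropy_update_sub (hp : ∀ m ∈ range n, p m ∈ Set.Ioo 0 1) {i j : ℕ}
    (hi : i ∈ range n) (hj : j ∈ range n) (hij : i ≠ j) :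
    deriv (fun t => pbEntropy n (Function.update p i t)) (p i) -
        deriv (fun t => pbEntropy n (Function.update p j t)) (p j) =
      (p i - p j) * ∑ k ∈ range (n + 1),
        ((X - 1) ^ 2 * poissonBinomialPGF (((range n).erase i).erase j) p).coeff k *
          log (poissonBinomial n p k) := by
  have hsplit : (X - 1) * poissonBinomialPGF ((range n).erase j) p =
      (X - 1) * poissonBinomialPGF ((range n).erase i) p +
        C (p i - p j) * ((X - 1) ^ 2 * poissonBinomialPGF (((range n).erase i).erase j) p) := by
    rw [poissonBinomialPGF_eq_mul_erase (mem_erase.2 ⟨hij.symm, hj⟩),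
      poissonBinomialPGF_eq_mul_erase (mem_erase.2 ⟨hij, hi⟩), erase_right_comm]
    simp only [map_sub, map_one]
    ring
  rw [deriv_pbEntropy_update hp hi, deriv_pbEntropy_update hp hj, hsplit]
  simp only [coeff_add, coeff_C_mul, add_mul, sum_add_distrib, mul_assoc, ← mul_sum]
  ring

theorem sum_coeff_X_sub_one_sq_mul_log_poissonBinomial_nonpos
    (hp : ∀ m ∈ range n, p m ∈ Set.Ioo 0 1) {i j : ℕ} (hi : i ∈ range n) (hj : j ∈ range n)
    (hij : i ≠ j) :
    ∑ k ∈ range (n + 1),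
      ((X - 1) ^ 2 * poissonBinomialPGF (((range n).erase i).erase j) p).coeff k *
        log (poissonBinomial n p k) ≤ 0 := by
  have hcard : #(((range n).erase i).erase j) + 2 = n := by
    rw [card_erase_of_mem (mem_erase.2 ⟨hij.symm, hj⟩), card_erase_of_mem hi, card_range]
    have := mem_range.1 hi; have := mem_range.1 hj; omega
  refine sum_coeff_X_sub_one_sq_mul_nonpos (coeff_poissonBinomialPGF_nonneg fun m hm => ?_)
    (by grw [natDegree_poissonBinomialPGF_le, hcard]) fun k hk => ?_
  · exact Set.Ioo_subset_Icc_self (hp m (mem_of_mem_erase (mem_of_mem_erase hm)))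
  · simp only [poissonBinomial_eq_coeff]
    exact log_coeff_poissonBinomialPGF_concave hp (by rwa [card_range])

theorem pbEntropy_schur_ostrowski (hp : ∀ m ∈ range n, p m ∈ Set.Ioo 0 1) {i j : ℕ}
    (hi : i ∈ range n) (hj : j ∈ range n) :
    (p i - p j) *
      (deriv (fun t => pbEntropy n (Function.update p i t)) (p i) -
        deriv (fun t => pbEntropy n (Function.update p j t)) (p j)) ≤ 0 := by
  rcases eq_or_ne i j with rfl | hij
  · simp
  rw [deriv_pbEntropy_update_sub hp hi hj hij, ← mul_assoc, ← sq]
  exact mul_nonpos_of_nonneg_of_nonpos (sq_nonneg _)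
    (sum_coeff_X_sub_one_sq_mul_log_poissonBinomial_nonpos hp hi hj hij)

theorem pbEntropy_le_update_update (hp : ∀ m ∈ range n, p m ∈ Set.Ioo 0 1) {i j : ℕ}
    (hi : i ∈ range n) (hj : j ∈ range n) (hij : i ≠ j) {u : ℝ} (hu : p i ≤ u)
    (hu' : u ≤ (p i + p j) / 2) :
    pbEntropy n p ≤ pbEntropy n (Function.update (Function.update p i u) j (p i + p j - u)) := by
  set σ := p i + p j
  set B := poissonBinomialPGF (((range n).erase i).erase j) p
  set q : ℝ → ℕ → ℝ := fun v => Function.update (Function.update p i v) j (σ - v)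
  have hq : ∀ v ∈ Set.Icc (p i) (σ / 2), ∀ m ∈ range n, q v m ∈ Set.Ioo 0 1 :=
    fun v hv => update_update_mem Set.ordConnected_Ioo hp hi hj hv.1 hv.2
  have hpoly : ∀ v, poissonBinomialPGF (range n) (q v) =
      (C σ * X + C (1 - σ)) * B + C (v * (σ - v)) * ((X - 1) ^ 2 * B) := fun v => by
    rw [poissonBinomialPGF_update_update hi hj hij]
    simp only [map_sub, map_one, map_mul]
    ring
  have hφ : ∀ v, HasDerivAt (fun v => v * (σ - v)) (σ - 2 * v) v := fun v =>
    ((hasDerivAt_id' v).mul ((hasDerivAt_id' v).const_sub σ)).congr_deriv (by ring)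
  have hderiv : ∀ v ∈ Set.Icc (p i) (σ / 2), HasDerivAt (fun v => pbEntropy n (q v))
      (-(σ - 2 * v) * ∑ k ∈ range (n + 1),
        ((X - 1) ^ 2 * B).coeff k * log (poissonBinomial n (q v) k)) v :=
    fun v hv => hasDerivAt_pbEntropy hpoly (hφ v) (hq v hv)
  have hmono : MonotoneOn (fun v => pbEntropy n (q v)) (Set.Icc (p i) (σ / 2)) := by
    refine monotoneOn_of_hasDerivWithinAt_nonneg (convex_Icc _ _)
      (fun v hv => (hderiv v hv).continuousAt.continuousWithinAt)
      (fun v hv => (hderiv v (interior_subset hv)).hasDerivWithinAt) fun v hv => ?_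
    have hv := interior_subset hv
    have hB : B = poissonBinomialPGF (((range n).erase i).erase j) (q v) :=
      poissonBinomialPGF_congr fun m hm => by
        simp only [q, Function.update_of_ne (ne_of_mem_erase hm),
          Function.update_of_ne (ne_of_mem_erase (mem_of_mem_erase hm))]
    rw [hB]
    exact mul_nonneg_of_nonpos_of_nonpos (by linarith [hv.2])
      (sum_coeff_X_sub_one_sq_mul_log_poissonBinomial_nonpos (hq v hv) hi hj hij)
  have hq_start : q (p i) = p := by
    simp only [q, σ, Function.update_eq_self, add_sub_cancel_left]
  simpa [hq_start] using hmono ⟨le_rfl, hu.trans hu'⟩ ⟨hu, hu'⟩ hu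

end PoissonBinomial

theorem poissonBinomial_entropy_schur_concave_general
    (n : ℕ) (p : ℕ → ℝ)
    (hp : ∀ i < n, p i ∈ Set.Ioo (0 : ℝ) 1) :
    (∀ i < n, ∀ j < n,
      (p i - p j) *
        (deriv (fun t => pbEntropy n (Function.update p i t)) (p i)
          - deriv (fun t => pbEntropy n (Function.update p j t)) (p j)) ≤ 0) ∧
    pbEntropy n p ≤ pbEntropy n (fun _ => (∑ i ∈ Finset.range n, p i) / n) := by
  have hp' : ∀ m ∈ range n, p m ∈ Set.Ioo 0 1 := fun m hm => hp m (mem_range.1 hm)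
  refine ⟨fun i hi j hj => pbEntropy_schur_ostrowski hp' (mem_range.2 hi) (mem_range.2 hj), ?_⟩
  simpa using le_apply_mean_of_transfer Set.ordConnected_Ioo (fun _ _ => pbEntropy_congr)
    (fun q hq i hi j hj hij _ => pbEntropy_le_update_update hq hi hj hij) hp'

/-- The entropy of the Poisson binomial distribution is Schur concave in the
success probabilities (the Schur–Ostrowski criterion
`(p_i − p_j)(∂H/∂p_i − ∂H/∂p_j) ≤ 0` holds); consequently the entropy is
maximized, for a fixed mean `n p̄`, by the binomial distribution `B(n, p̄)` with
all success probabilities equal to `p̄ = (Σ p_i)/n`. -/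
theorem poissonBinomial_entropy_schur_concave
    (n : ℕ) (hn : 1 ≤ n) (p : ℕ → ℝ)
    (hp : ∀ i < n, p i ∈ Set.Ioo (0 : ℝ) 1) :
    (∀ i < n, ∀ j < n,
      (p i - p j) *
        (deriv (fun t => pbEntropy n (Function.update p i t)) (p i)
          - deriv (fun t => pbEntropy n (Function.update p j t)) (p j)) ≤ 0) ∧
    pbEntropy n p ≤ pbEntropy n (fun _ => (∑ i ∈ Finset.range n, p i) / n) :=
  poissonBinomial_entropy_schur_concave_general n p hp
end

section
/- Let X = (X_1, ..., X_k) be a multivariate Bernoulli random vector on {0,1}^k with strictly positive joint probabilities, written in exponential family form P(X = x) = exp(Σ_{∅≠S⊆{1,...,k}} θ_S Π_{i∈S} x_i − A(θ)). Then the components X_1, ..., X_k are mutually independent if and only if θ_S = 0 for all S with |S| ≥ 2. -/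
/-!
Independence says `P(A) = P(∅) ∏_{i ∈ A} P({i}) / P(∅)`, i.e. `log P(A) - log P(∅)` is additive
in `A`. In log-linear form this quantity is `∑_{∅ ≠ T ⊆ A} θ_T`, and by Möbius inversion on the
subset lattice such a sum is additive in `A` exactly when every `θ_T` with `|T| ≥ 2` vanishes.
-/
open Finset

section Interactions

variable {α M : Type*} [DecidableEq α]

lemma sum_powerset_ne_empty_eq_sum_singleton_add [AddCommMonoid M] (θ : Finset α → M)
    (A : Finset α) :
    ∑ T ∈ A.powerset with T ≠ ∅, θ T =
      ∑ i ∈ A, θ {i} + ∑ T ∈ A.powerset with 2 ≤ #T, θ T := by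
  have hsplit : {T ∈ A.powerset | T ≠ ∅} = A.powersetCard 1 ∪ {T ∈ A.powerset | 2 ≤ #T} := by
    ext T
    simp only [mem_filter, mem_union, mem_powersetCard, mem_powerset, ne_eq,
      ← card_eq_zero, ← and_or_left]
    exact and_congr_right fun _ => by omega
  have hdisj : Disjoint (A.powersetCard 1) {T ∈ A.powerset | 2 ≤ #T} :=
    disjoint_left.2 fun T h1 h2 => by
      rw [mem_powersetCard] at h1; rw [mem_filter] at h2; omega
  rw [hsplit, sum_union hdisj, powersetCard_one, sum_map]
  rfl

lemma eq_zero_of_forall_sum_powerset_eq_zero [AddCommMonoid M] {f : Finset α → M}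
    (h : ∀ A : Finset α, ∑ T ∈ A.powerset, f T = 0) (S : Finset α) : f S = 0 := by
  induction S using Finset.strongInduction with
  | H S ih =>
    rw [← h S, ← add_sum_erase _ _ (mem_powerset_self S), sum_eq_zero, add_zero]
    intro T hT
    exact ih T <| Finset.ssubset_iff_subset_ne.2
      ⟨mem_powerset.1 (mem_of_mem_erase hT), ne_of_mem_erase hT⟩

theorem forall_sum_powerset_ne_empty_eq_sum_singleton_iff [AddCommGroup M]
    (θ : Finset α → M) :
    (∀ A : Finset α, ∑ T ∈ A.powerset with T ≠ ∅, θ T = ∑ i ∈ A, θ {i}) ↔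
      ∀ S : Finset α, 2 ≤ #S → θ S = 0 := by
  simp_rw [sum_powerset_ne_empty_eq_sum_singleton_add, add_eq_left]
  refine ⟨fun h S hS => ?_, fun h A => sum_eq_zero fun T hT => h T (mem_filter.1 hT).2⟩
  have := eq_zero_of_forall_sum_powerset_eq_zero
    (f := fun T => if 2 ≤ #T then θ T else 0) (fun A => (sum_filter _ _).symm.trans (h A)) S
  simpa [hS] using this

end Interactions

section Bernoulli

variable {α K : Type*} [Fintype α] [DecidableEq α]

def bernoulliProd [CommRing K] (p : α → K) (A : Finset α) : K :=
  ∏ i, if i ∈ A then p i else 1 - p i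

-- `P(X_i = 1)`, an outcome being encoded by the set `{i | X_i = 1}`
def marginal [CommRing K] (P : Finset α → K) (i : α) : K :=
  ∑ B with i ∈ B, P B

lemma bernoulliProd_eq_prod_mul_prod_compl [CommRing K] (p : α → K) (A : Finset α) :
    bernoulliProd p A = (∏ i ∈ A, p i) * ∏ i ∈ Aᶜ, (1 - p i) := by
  rw [bernoulliProd, prod_ite, filter_mem_eq_inter, univ_inter, filter_notMem_eq_sdiff,
    compl_eq_univ_sdiff]

lemma marginal_bernoulliProd [CommRing K] (p : α → K) : marginal (bernoulliProd p) = p := by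
  funext i
  have hterm : ∀ t : Finset α, ((∏ j ∈ t, p j) * ∏ j ∈ univ \ t, if j = i then 0 else 1 - p j) =
      if i ∈ t then bernoulliProd p t else 0 := by
    intro t
    split_ifs with hi
    · rw [bernoulliProd_eq_prod_mul_prod_compl, compl_eq_univ_sdiff]
      refine congrArg _ (prod_congr rfl fun j hj => if_neg ?_)
      rintro rfl
      exact (mem_sdiff.1 hj).2 hi
    · exact mul_eq_zero_of_right _ (prod_eq_zero (mem_sdiff.2 ⟨mem_univ i, hi⟩) (if_pos rfl))
  have hfactor : ∀ j, (p j + if j = i then 0 else 1 - p j) = if j = i then p j else 1 := by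
    intro j
    split_ifs <;> ring
  calc marginal (bernoulliProd p) i
      = ∑ t, ((∏ j ∈ t, p j) * ∏ j ∈ univ \ t, if j = i then 0 else 1 - p j) := by
        rw [marginal, sum_filter, ← powerset_univ]
        exact sum_congr rfl fun t _ => (hterm t).symm
    _ = ∏ j, (p j + if j = i then 0 else 1 - p j) := by rw [prod_add, powerset_univ]
    _ = p i := by rw [prod_congr rfl fun j _ => hfactor j, prod_ite_eq' univ i, if_pos (mem_univ i)]

lemma bernoulliProd_eq_mul_prod_div [Field K] {p : α → K} (hp : ∀ i, p i ≠ 1) (A : Finset α) :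
    bernoulliProd p A = bernoulliProd p ∅ * ∏ i ∈ A, p i / (1 - p i) := by
  have hp' : ∀ i, 1 - p i ≠ 0 := fun i => sub_ne_zero.2 (hp i).symm
  rw [bernoulliProd_eq_prod_mul_prod_compl, bernoulliProd_eq_prod_mul_prod_compl, prod_empty,
    one_mul, compl_empty, ← prod_mul_prod_compl A, mul_right_comm, ← prod_mul_distrib]
  exact congrArg (· * _) (prod_congr rfl fun i _ => (mul_div_cancel₀ _ (hp' i)).symm)

lemma bernoulliProd_div_one_add [Field K] {q : α → K} (hq : ∀ i, 1 + q i ≠ 0) (A : Finset α) :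
    bernoulliProd (fun i => q i / (1 + q i)) A = (∏ i ∈ A, q i) / ∏ i, (1 + q i) := by
  have h : ∀ i, (if i ∈ A then q i / (1 + q i) else 1 - q i / (1 + q i)) =
      (if i ∈ A then q i else 1) / (1 + q i) := by
    intro i
    split_ifs
    · rfl
    · field_simp [hq i]; ring
  rw [bernoulliProd, prod_congr rfl fun i _ => h i, prod_div_distrib, prod_ite_mem, univ_inter]

theorem forall_eq_bernoulliProd_marginal_iff [Field K] {P : Finset α → K} (hP : P ∅ ≠ 0)
    (hsum : ∑ A, P A = 1) :
    (∀ A, P A = bernoulliProd (marginal P) A) ↔ ∀ A, P A = P ∅ * ∏ i ∈ A, P {i} / P ∅ := by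
  constructor
  · intro hind
    set p := marginal P
    have hp : ∀ i, p i ≠ 1 := by
      have h0 : ∏ i, (1 - p i) ≠ 0 := by simpa [hind ∅, bernoulliProd] using hP
      intro i hi
      exact h0 (prod_eq_zero (mem_univ i) (by rw [hi, sub_self]))
    have hodds : ∀ i, P {i} / P ∅ = p i / (1 - p i) := by
      intro i
      rw [div_eq_iff hP, hind {i}, bernoulliProd_eq_mul_prod_div hp, prod_singleton, hind ∅,
        mul_comm]
    intro A
    simp_rw [hodds]
    rw [hind A, hind ∅]
    exact bernoulliProd_eq_mul_prod_div hp A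
  · intro hprod
    set q : α → K := fun i => P {i} / P ∅
    have hnorm : P ∅ * ∏ i, (1 + q i) = 1 := by
      rw [prod_one_add, powerset_univ, mul_sum, ← hsum]
      exact sum_congr rfl fun A _ => (hprod A).symm
    have hprod_ne : ∏ i, (1 + q i) ≠ 0 := right_ne_zero_of_mul_eq_one hnorm
    have hq : ∀ i, 1 + q i ≠ 0 := fun i => prod_ne_zero_iff.1 hprod_ne i (mem_univ i)
    have hP_eq : P = bernoulliProd fun i => q i / (1 + q i) := by
      funext A
      rw [bernoulliProd_div_one_add hq, hprod A, eq_div_iff hprod_ne,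
        mul_right_comm, hnorm, one_mul]
    intro A
    rw [hP_eq, marginal_bernoulliProd]

end Bernoulli

theorem multivariate_bernoulli_independence_iff_general
    (k : ℕ) (P : Finset (Fin k) → ℝ) (θ : Finset (Fin k) → ℝ) (A0 : ℝ)
    (hsum : ∑ A : Finset (Fin k), P A = 1)
    (hform : ∀ A : Finset (Fin k),
      P A = Real.exp ((∑ S ∈ A.powerset.filter (fun S => S ≠ ∅), θ S) - A0)) :
    (∀ A : Finset (Fin k),
        P A = ∏ i : Fin k,
          if i ∈ A then ∑ B ∈ Finset.univ.filter (fun B : Finset (Fin k) => i ∈ B), P B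
          else 1 - ∑ B ∈ Finset.univ.filter (fun B : Finset (Fin k) => i ∈ B), P B)
      ↔ (∀ S : Finset (Fin k), 2 ≤ S.card → θ S = 0) := by
  have hempty : P ∅ = Real.exp (-A0) := by simpa [filter_singleton] using hform ∅
  have hsingleton : ∀ i, P {i} / P ∅ = Real.exp (θ {i}) := by
    intro i
    rw [hform, hempty, ← Real.exp_sub, show ({i} : Finset (Fin k)).powerset = {∅, {i}} from rfl]
    simp [filter_insert, filter_singleton]
  refine (forall_eq_bernoulliProd_marginal_iff (hempty ▸ Real.exp_ne_zero _) hsum).trans ?_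
  rw [← forall_sum_powerset_ne_empty_eq_sum_singleton_iff]
  refine forall_congr' fun A => ?_
  simp_rw [hsingleton, ← Real.exp_sum]
  rw [hform A, hempty, ← Real.exp_add, Real.exp_eq_exp, neg_add_eq_sub, sub_left_inj]

/-- Independence criterion for the multivariate Bernoulli distribution written in
exponential-family (log-linear) form: a strictly positive pmf on `{0,1}^k`
(outcomes identified with subsets `A ⊆ {1,…,k}` via their support), written as
`P(A) = exp(Σ_{∅≠S⊆A} θ_S − A₀)`, has mutually independent components if and
only if all interaction parameters `θ_S` with `|S| ≥ 2` vanish. -/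
theorem multivariate_bernoulli_independence_iff
    (k : ℕ) (P : Finset (Fin k) → ℝ) (θ : Finset (Fin k) → ℝ) (A0 : ℝ)
    (hpos : ∀ A, 0 < P A)
    (hsum : ∑ A : Finset (Fin k), P A = 1)
    (hform : ∀ A : Finset (Fin k),
      P A = Real.exp ((∑ S ∈ A.powerset.filter (fun S => S ≠ ∅), θ S) - A0)) :
    (∀ A : Finset (Fin k),
        P A = ∏ i : Fin k,
          if i ∈ A then ∑ B ∈ Finset.univ.filter (fun B : Finset (Fin k) => i ∈ B), P B
          else 1 - ∑ B ∈ Finset.univ.filter (fun B : Finset (Fin k) => i ∈ B), P B)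
      ↔ (∀ S : Finset (Fin k), 2 ≤ S.card → θ S = 0) :=
  multivariate_bernoulli_independence_iff_general k P θ A0 hsum hform
end
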